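/- Let p(z) ∈ ℂ[z] be a nonzero polynomial and N a positive integer such that |p(z)|²·q(z,z̄) = (1+|z|²)^N for all z ∈ ℂ, where q is a polynomial function in z and z̄. Then p is a nonzero constant and q(z,z̄) = |p|^{−2}(1+|z|²)^N. -/
import Mathlib


open MvPolynomial Complex

/-- Evaluation of a two-variable polynomial at `(z, z̄)`. -/
noncomputable def evalZZbar (Q : MvPolynomial (Fin 2) ℂ) (z : ℂ) : ℂ :=
  eval (fun i => if i = 0 then z else (starRingEnd ℂ) z) Q

/-- If `|p(z)|²·q(z,z̄) = (1+|z|²)^N` with `p ∈ ℂ[z]` nonzero, `N ≥ 1` and `q` a polynomial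
function in `z` and `z̄`, then `p` is a nonzero constant `c` and
`q(z,z̄) = |c|^{−2}(1+|z|²)^N`. -/
theorem polynomial_factor_constant (p : Polynomial ℂ) (hp : p ≠ 0)
    (N : ℕ) (hN : 1 ≤ N) (q : MvPolynomial (Fin 2) ℂ)
    (heq : ∀ z : ℂ,
      ((Complex.normSq (p.eval z) : ℝ) : ℂ) * evalZZbar q z =
        (((1 + Complex.normSq z) ^ N : ℝ) : ℂ)) :
    ∃ c : ℂ, c ≠ 0 ∧ p = Polynomial.C c ∧
      ∀ z : ℂ, evalZZbar q z =
        ((((1 + Complex.normSq z) ^ N / Complex.normSq c) : ℝ) : ℂ) := by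
  have hpos : ∀ z : ℂ, (0:ℝ) < (1 + Complex.normSq z) ^ N := by
    intro z
    have h0 := Complex.normSq_nonneg z
    have : (0:ℝ) < 1 + Complex.normSq z := by linarith
    positivity
  have hnoroot : ∀ z : ℂ, p.eval z ≠ 0 := by
    intro z hz
    have h := heq z
    rw [hz] at h
    simp only [Complex.normSq_zero, Complex.ofReal_zero, zero_mul] at h
    have := (hpos z).ne'
    exact this (by exact_mod_cast h.symm)
  -- p is constant since ℂ is algebraically closed and p has no roots
  have hdeg : p.degree ≤ 0 := by
    by_contra h
    push_neg at h
    obtain ⟨z, hz⟩ := Complex.exists_root h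
    exact hnoroot z hz
  have hc := Polynomial.degree_le_zero_iff.mp hdeg
  set c := p.coeff 0 with hcdef
  have hc0 : c ≠ 0 := by
    intro h
    exact hnoroot 0 (by simp [hc, h])
  refine ⟨c, hc0, hc, fun z => ?_⟩
  have h := heq z
  rw [hc] at h
  simp only [Polynomial.eval_C] at h
  have hns : Complex.normSq c ≠ 0 := by
    simpa using hc0
  have hns' : ((Complex.normSq c : ℝ) : ℂ) ≠ 0 := by
    exact_mod_cast hns
  rw [Complex.ofReal_div]
  field_simp at h ⊢
  linear_combination h
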